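/- If Λ_D : Pauli_A → Pauli_D (mod phase) and Ω_A : Pauli_D → Pauli_A (mod phase) are the forward and backward maps of a Clifford unitary U (so that α_{P_A,Q_D} = F_{Λ_D(P_A),Q_D} = F_{P_A,Ω_A(Q_D)} for all P_A, Q_D), and Λ_D is injective, then Ω_A is surjective; moreover the preimages Q_D with Ω_A(Q_D) = P_A can be characterized by (1/d_A^2) ∑_{P'_A} F_{R_A,P'_A} α_{P'_A,Q_D} = δ_{Ω_A(Q_D),R_A}. -/

import Mathlib

open Matrix Kronecker BigOperators

/-- The `n`-qubit Pauli operator `X^x Z^z` (symplectic representation). -/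
noncomputable def pauli {n : ℕ} (x z : Fin n → ZMod 2) :
    Matrix (Fin n → ZMod 2) (Fin n → ZMod 2) ℂ :=
  fun j k => if j = k + x then ((-1 : ℂ)) ^ (∑ i, (z i * k i).val) else 0

/-- The commutation-phase matrix `F_{P,Q} = (1/d) Tr(PQP†Q†)` on `n` qubits. -/
noncomputable def Fmat (n : ℕ) (p q : (Fin n → ZMod 2) × (Fin n → ZMod 2)) : ℂ :=
  ((2 ^ n : ℂ))⁻¹ * (pauli p.1 p.2 * pauli q.1 q.2 *
    (pauli p.1 p.2)ᴴ * (pauli q.1 q.2)ᴴ).trace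

/-- The OTOC `α_{P_A,Q_D} = (1/d) Tr(P_A(t) Q_D P_A(t)† Q_D†)`. -/
noncomputable def otoc (nA nB nC nD : ℕ)
    (U : Matrix ((Fin nC → ZMod 2) × (Fin nD → ZMod 2))
      ((Fin nA → ZMod 2) × (Fin nB → ZMod 2)) ℂ)
    (x z : Fin nA → ZMod 2) (xq zq : Fin nD → ZMod 2) : ℂ :=
  ((2 ^ nC * 2 ^ nD : ℂ))⁻¹ *
    (U * (pauli x z ⊗ₖ (1 : Matrix (Fin nB → ZMod 2) (Fin nB → ZMod 2) ℂ)) * Uᴴ *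
      ((1 : Matrix (Fin nC → ZMod 2) (Fin nC → ZMod 2) ℂ) ⊗ₖ pauli xq zq) *
      U * ((pauli x z)ᴴ ⊗ₖ (1 : Matrix (Fin nB → ZMod 2) (Fin nB → ZMod 2) ℂ)) * Uᴴ *
      ((1 : Matrix (Fin nC → ZMod 2) (Fin nC → ZMod 2) ℂ) ⊗ₖ (pauli xq zq)ᴴ)).trace

/-!
Both Clifford hypotheses turn the OTOC into a commutation phase: conjugating `P_A ⊗ 1` forward
gives `α_{P,Q} = F_{Λ(P),Q}`, and cycling the trace so that `1 ⊗ Q_D` is conjugated backward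
gives `α_{P,Q} = F_{P,Ω(Q)}`. The characterization of the preimages is then the inversion
identity for `F`. For surjectivity, nondegeneracy of `F` forces `Λ(0) = 0`, so by injectivity
`∑_Q F_{P,Ω(Q)}` vanishes unless `P = 0`. If `R` had no preimage, summing the characterization
over all `Q` would give `0`, while exchanging the sums gives `F_{R,0} d_D² ≠ 0`.
-/

open Finset Function

section SignCharacter

variable {n : ℕ}

noncomputable def signChar (z : Fin n → ZMod 2) : AddChar (Fin n → ZMod 2) ℂ :=
  (AddChar.zmodChar 2 neg_one_sq).compAddMonoidHom (AddMonoidHom.mk' (z ⬝ᵥ ·) (dotProduct_add z))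

lemma signChar_apply (z x : Fin n → ZMod 2) : signChar z x = (-1) ^ (z ⬝ᵥ x).val :=
  AddChar.zmodChar_apply neg_one_sq _

lemma signChar_comm (z x : Fin n → ZMod 2) : signChar z x = signChar x z := by
  rw [signChar_apply, signChar_apply, dotProduct_comm]

lemma signChar_add_left (z y x : Fin n → ZMod 2) :
    signChar (z + y) x = signChar z x * signChar y x := by
  rw [signChar_comm, AddChar.map_add_eq_mul, signChar_comm x, signChar_comm x]

@[simp] lemma signChar_zero_left (x : Fin n → ZMod 2) : signChar 0 x = 1 := by
  rw [signChar_comm, AddChar.map_zero_eq_one]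

lemma signChar_mul_self (z x : Fin n → ZMod 2) : signChar z x * signChar z x = 1 := by
  rw [← AddChar.map_add_eq_mul, ZModModule.add_self, AddChar.map_zero_eq_one]

@[simp] lemma star_signChar (z x : Fin n → ZMod 2) : star (signChar z x) = signChar z x := by
  simp [signChar_apply]

lemma signChar_eq_zero_iff {z : Fin n → ZMod 2} : signChar z = 0 ↔ z = 0 := by
  refine ⟨fun h => ?_, fun h => by ext x; simp [h]⟩
  by_contra hz
  obtain ⟨i, hi⟩ := Function.ne_iff.mp hz
  have hval : (z i).val = 1 := by
    have := ZMod.val_lt (z i)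
    have := (ZMod.val_ne_zero (z i)).mpr hi
    omega
  have := DFunLike.congr_fun h (Pi.single i 1)
  rw [signChar_apply, dotProduct_single, mul_one, hval, AddChar.zero_apply] at this
  norm_num at this

lemma sum_signChar (z : Fin n → ZMod 2) :
    ∑ x, signChar z x = if z = 0 then (2 ^ n : ℂ) else 0 := by
  classical
  rw [AddChar.sum_eq_ite]
  simp [signChar_eq_zero_iff]

end SignCharacter

lemma neg_one_pow_sum_val {R ι : Type*} [Ring R] (s : Finset ι)
    (f : ι → ZMod 2) : (-1 : R) ^ (∑ i ∈ s, (f i).val) = (-1) ^ (∑ i ∈ s, f i).val := by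
  rw [neg_one_pow_eq_pow_mod_two, ← ZMod.val_natCast, Nat.cast_sum]
  simp

lemma card_fin_zmod_two (n : ℕ) : Fintype.card (Fin n → ZMod 2) = 2 ^ n := by simp

section Pauli

variable {n : ℕ}

lemma pauli_apply (x z j k : Fin n → ZMod 2) :
    pauli x z j k = if j = k + x then signChar z k else 0 := by
  rw [pauli, signChar_apply, dotProduct, neg_one_pow_sum_val]

@[simp] lemma pauli_zero_zero : pauli (0 : Fin n → ZMod 2) 0 = 1 := by
  ext j k
  simp [pauli_apply, one_apply]

lemma pauli_mul (x z x' z' : Fin n → ZMod 2) :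
    pauli x z * pauli x' z' = signChar z x' • pauli (x + x') (z + z') := by
  ext j k
  rw [mul_apply, Finset.sum_eq_single (k + x')]
  · simp only [pauli_apply, if_pos, Matrix.smul_apply, smul_eq_mul, AddChar.map_add_eq_mul,
      signChar_add_left, add_assoc, add_comm x' x]
    split_ifs <;> ring
  · intro m _ hm
    rw [pauli_apply x' z' m k, if_neg hm, mul_zero]
  · simp

lemma pauli_conjTranspose (x z : Fin n → ZMod 2) :
    (pauli x z)ᴴ = signChar z x • pauli x z := by
  ext j k
  have hswap : k = j + x ↔ j = k + x := by
    constructor <;> rintro rfl <;> rw [add_assoc, ZModModule.add_self, add_zero]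
  simp only [conjTranspose_apply, Matrix.smul_apply, pauli_apply, smul_eq_mul, hswap]
  split_ifs with h
  · rw [star_signChar, h, AddChar.map_add_eq_mul, mul_comm]
  · simp

lemma pauli_mul_conjTranspose_self (x z : Fin n → ZMod 2) : pauli x z * (pauli x z)ᴴ = 1 := by
  rw [pauli_conjTranspose, Matrix.mul_smul, pauli_mul, smul_smul, signChar_mul_self,
    ZModModule.add_self, ZModModule.add_self, pauli_zero_zero, one_smul]

end Pauli

section StarCommutator

variable {R : Type*} [CommRing R] [StarRing R] {m l k : Type*} [Fintype m] [Fintype l] [Fintype k]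

def starCommutator (A B : Matrix m m R) : Matrix m m R := A * B * Aᴴ * Bᴴ

lemma starCommutator_kronecker (A B : Matrix m m R) (A' B' : Matrix l l R) :
    starCommutator (A ⊗ₖ A') (B ⊗ₖ B') = starCommutator A B ⊗ₖ starCommutator A' B' := by
  simp only [starCommutator, conjTranspose_kronecker, mul_kronecker_mul]

lemma starCommutator_smul_left (c : R) (A B : Matrix m m R) :
    starCommutator (c • A) B = (c * star c) • starCommutator A B := by
  simp only [starCommutator, conjTranspose_smul, Matrix.smul_mul, Matrix.mul_smul, smul_smul,
    mul_comm (star c) c]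

lemma starCommutator_smul_right (c : R) (A B : Matrix m m R) :
    starCommutator A (c • B) = (c * star c) • starCommutator A B := by
  simp only [starCommutator, conjTranspose_smul, Matrix.smul_mul, Matrix.mul_smul, smul_smul,
    mul_comm (star c) c]

lemma starCommutator_one_left [DecidableEq m] (B : Matrix m m R) :
    starCommutator 1 B = B * Bᴴ := by
  simp [starCommutator]

lemma starCommutator_one_right [DecidableEq m] (A : Matrix m m R) :
    starCommutator A 1 = A * Aᴴ := by
  simp [starCommutator]

lemma trace_starCommutator_conj (U : Matrix m k R) (X : Matrix k k R) (B : Matrix m m R) :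
    trace (starCommutator (U * X * Uᴴ) B) = trace (starCommutator X (Uᴴ * B * U)) := by
  simp only [starCommutator, conjTranspose_mul, conjTranspose_conjTranspose, Matrix.mul_assoc]
  rw [trace_mul_comm U]
  simp only [Matrix.mul_assoc]

end StarCommutator

section Fmat

variable {n : ℕ}

lemma starCommutator_pauli (p q : (Fin n → ZMod 2) × (Fin n → ZMod 2)) :
    starCommutator (pauli p.1 p.2) (pauli q.1 q.2) = (signChar p.2 q.1 * signChar q.2 p.1) • 1 := by
  have add_add_self : ∀ a b : Fin n → ZMod 2, a + b + a = b := fun a b => by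
    rw [add_right_comm, ZModModule.add_self, zero_add]
  simp only [starCommutator, pauli_conjTranspose, Matrix.mul_smul, Matrix.smul_mul, pauli_mul,
    smul_smul, add_add_self, ZModModule.add_self, pauli_zero_zero, signChar_add_left]
  congr 1
  linear_combination (signChar p.2 q.1 * signChar q.2 p.1) *
    (signChar p.2 p.1 ^ 2 * signChar_mul_self q.2 q.1 + signChar_mul_self p.2 p.1)

lemma Fmat_eq_signChar (p q : (Fin n → ZMod 2) × (Fin n → ZMod 2)) :
    Fmat n p q = signChar p.2 q.1 * signChar q.2 p.1 := by
  rw [Fmat, ← starCommutator, starCommutator_pauli, trace_smul, trace_one, card_fin_zmod_two,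
    smul_eq_mul]
  push_cast
  field_simp

lemma starCommutator_pauli_eq_Fmat (p q : (Fin n → ZMod 2) × (Fin n → ZMod 2)) :
    starCommutator (pauli p.1 p.2) (pauli q.1 q.2) = Fmat n p q • 1 := by
  rw [starCommutator_pauli, Fmat_eq_signChar]

lemma Fmat_comm (p q : (Fin n → ZMod 2) × (Fin n → ZMod 2)) : Fmat n p q = Fmat n q p := by
  rw [Fmat_eq_signChar, Fmat_eq_signChar, mul_comm, signChar_comm]

lemma Fmat_add_right (p q r : (Fin n → ZMod 2) × (Fin n → ZMod 2)) :
    Fmat n p (q + r) = Fmat n p q * Fmat n p r := by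
  simp only [Fmat_eq_signChar, Prod.fst_add, Prod.snd_add, AddChar.map_add_eq_mul,
    signChar_add_left]
  ring

@[simp] lemma Fmat_zero_left (q : (Fin n → ZMod 2) × (Fin n → ZMod 2)) : Fmat n 0 q = 1 := by
  simp [Fmat_eq_signChar]

@[simp] lemma Fmat_zero_right (p : (Fin n → ZMod 2) × (Fin n → ZMod 2)) : Fmat n p 0 = 1 := by
  rw [Fmat_comm, Fmat_zero_left]

lemma sum_Fmat (p : (Fin n → ZMod 2) × (Fin n → ZMod 2)) :
    ∑ q, Fmat n p q = if p = 0 then (2 ^ n : ℂ) ^ 2 else 0 := by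
  simp only [Fmat_eq_signChar, Fintype.sum_prod_type, signChar_comm _ p.1]
  rw [← Finset.sum_mul_sum, sum_signChar, sum_signChar]
  rcases p with ⟨x, z⟩
  by_cases hx : x = 0 <;> by_cases hz : z = 0 <;> simp [hx, hz, sq]

lemma eq_zero_of_forall_Fmat_eq_one {p : (Fin n → ZMod 2) × (Fin n → ZMod 2)}
    (h : ∀ q, Fmat n p q = 1) : p = 0 := by
  by_contra hp
  have := sum_Fmat p
  simp [h, hp] at this

lemma sum_Fmat_mul_Fmat (p r : (Fin n → ZMod 2) × (Fin n → ZMod 2)) :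
    ∑ q, Fmat n p q * Fmat n q r = if p = r then (2 ^ n : ℂ) ^ 2 else 0 := by
  have h : ∀ q, Fmat n p q * Fmat n q r = Fmat n (p + r) q := fun q => by
    rw [Fmat_comm p, ← Fmat_add_right, Fmat_comm]
  simp only [h, sum_Fmat, add_eq_zero_iff_eq_neg, ZModModule.neg_eq_self]

end Fmat

theorem surjective_of_Fmat_adjoint {m n : ℕ}
    {Λ : (Fin m → ZMod 2) × (Fin m → ZMod 2) → (Fin n → ZMod 2) × (Fin n → ZMod 2)}
    {Ω : (Fin n → ZMod 2) × (Fin n → ZMod 2) → (Fin m → ZMod 2) × (Fin m → ZMod 2)}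
    (hadj : ∀ P Q, Fmat n (Λ P) Q = Fmat m P (Ω Q)) (hΛ : Injective Λ) : Surjective Ω := by
  intro R
  have hΛ0 : Λ 0 = 0 := eq_zero_of_forall_Fmat_eq_one fun Q => by rw [hadj, Fmat_zero_left]
  have hcol : ∀ P, ∑ Q, Fmat m P (Ω Q) = if P = 0 then (2 ^ n : ℂ) ^ 2 else 0 := fun P => by
    simp only [← hadj, sum_Fmat, hΛ.eq_iff' hΛ0]
  by_contra! hR
  have hzero : ∑ Q, ∑ P, Fmat m R P * Fmat m P (Ω Q) = 0 :=
    sum_eq_zero fun Q _ => by rw [sum_Fmat_mul_Fmat, if_neg fun h => hR Q h.symm]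
  rw [sum_comm] at hzero
  simp [← mul_sum, hcol] at hzero

lemma mul_star_self_of_norm_eq_one {c : ℂ} (hc : ‖c‖ = 1) : c * star c = 1 := by
  simpa [hc] using Complex.mul_conj' c

section OTOC

variable {nA nB nC nD : ℕ} (U : Matrix ((Fin nC → ZMod 2) × (Fin nD → ZMod 2))
  ((Fin nA → ZMod 2) × (Fin nB → ZMod 2)) ℂ)

lemma otoc_eq_trace_starCommutator (x z : Fin nA → ZMod 2) (xq zq : Fin nD → ZMod 2) :
    otoc nA nB nC nD U x z xq zq = (2 ^ nC * 2 ^ nD : ℂ)⁻¹ *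
      trace (starCommutator
        (U * (pauli x z ⊗ₖ (1 : Matrix (Fin nB → ZMod 2) (Fin nB → ZMod 2) ℂ)) * Uᴴ)
        ((1 : Matrix (Fin nC → ZMod 2) (Fin nC → ZMod 2) ℂ) ⊗ₖ pauli xq zq)) := by
  simp only [otoc, starCommutator, conjTranspose_mul, conjTranspose_kronecker,
    conjTranspose_conjTranspose, conjTranspose_one, Matrix.mul_assoc]

lemma otoc_eq_Fmat_of_conj_eq {c : ℂ} (hc : ‖c‖ = 1) {x z : Fin nA → ZMod 2}
    {xc zc : Fin nC → ZMod 2} {xd zd : Fin nD → ZMod 2}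
    (h : U * (pauli x z ⊗ₖ (1 : Matrix (Fin nB → ZMod 2) (Fin nB → ZMod 2) ℂ)) * Uᴴ
      = c • (pauli xc zc ⊗ₖ pauli xd zd)) (xq zq : Fin nD → ZMod 2) :
    otoc nA nB nC nD U x z xq zq = Fmat nD (xd, zd) (xq, zq) := by
  rw [otoc_eq_trace_starCommutator, h, starCommutator_smul_left, mul_star_self_of_norm_eq_one hc,
    one_smul, starCommutator_kronecker, starCommutator_one_right, pauli_mul_conjTranspose_self,
    starCommutator_pauli_eq_Fmat (xd, zd) (xq, zq), kronecker_smul, one_kronecker_one,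
    trace_smul, trace_one, Fintype.card_prod, card_fin_zmod_two, card_fin_zmod_two, smul_eq_mul]
  push_cast
  field_simp

lemma otoc_eq_Fmat_of_adjoint_conj_eq (hU₁ : U * Uᴴ = 1) (hU₂ : Uᴴ * U = 1) {c : ℂ}
    (hc : ‖c‖ = 1) {xq zq : Fin nD → ZMod 2} {xa za : Fin nA → ZMod 2} {xb zb : Fin nB → ZMod 2}
    (h : Uᴴ * ((1 : Matrix (Fin nC → ZMod 2) (Fin nC → ZMod 2) ℂ) ⊗ₖ pauli xq zq) * U
      = c • (pauli xa za ⊗ₖ pauli xb zb)) (x z : Fin nA → ZMod 2) :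
    otoc nA nB nC nD U x z xq zq = Fmat nA (x, z) (xa, za) := by
  have hcard : (2 ^ nA * 2 ^ nB : ℂ) = 2 ^ nC * 2 ^ nD := by
    have := Matrix.square_of_invertible _ _ hU₁ hU₂
    simp only [Fintype.card_prod, card_fin_zmod_two] at this
    exact_mod_cast this.symm
  rw [otoc_eq_trace_starCommutator, trace_starCommutator_conj, h, starCommutator_smul_right,
    mul_star_self_of_norm_eq_one hc, one_smul, starCommutator_kronecker,
    starCommutator_pauli_eq_Fmat (x, z) (xa, za), starCommutator_one_left,
    pauli_mul_conjTranspose_self, smul_kronecker, one_kronecker_one, trace_smul, trace_one,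
    Fintype.card_prod, card_fin_zmod_two, card_fin_zmod_two, smul_eq_mul]
  push_cast
  rw [hcard]
  field_simp

end OTOC

/-- If `Λ_D` is injective then `Ω_A` is surjective, and the preimages are
characterized by `(1/d_A²) ∑_{P'_A} F_{R_A,P'_A} α_{P'_A,Q_D} = δ_{Ω_A(Q_D),R_A}`. -/
theorem stmt15 (nA nB nC nD : ℕ)
    (U : Matrix ((Fin nC → ZMod 2) × (Fin nD → ZMod 2))
      ((Fin nA → ZMod 2) × (Fin nB → ZMod 2)) ℂ)
    (hU1 : U * Uᴴ = 1) (hU2 : Uᴴ * U = 1)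
    (c : (Fin nA → ZMod 2) → (Fin nA → ZMod 2) → ℂ)
    (xc zc : (Fin nA → ZMod 2) → (Fin nA → ZMod 2) → (Fin nC → ZMod 2))
    (xd zd : (Fin nA → ZMod 2) → (Fin nA → ZMod 2) → (Fin nD → ZMod 2))
    (hClif : ∀ x z : Fin nA → ZMod 2, ‖c x z‖ = 1 ∧
      U * (pauli x z ⊗ₖ (1 : Matrix (Fin nB → ZMod 2) (Fin nB → ZMod 2) ℂ)) * Uᴴ
        = c x z • (pauli (xc x z) (zc x z) ⊗ₖ pauli (xd x z) (zd x z)))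
    (c' : (Fin nD → ZMod 2) → (Fin nD → ZMod 2) → ℂ)
    (gxa gza : (Fin nD → ZMod 2) → (Fin nD → ZMod 2) → (Fin nA → ZMod 2))
    (gxb gzb : (Fin nD → ZMod 2) → (Fin nD → ZMod 2) → (Fin nB → ZMod 2))
    (hClif' : ∀ xq zq : Fin nD → ZMod 2, ‖c' xq zq‖ = 1 ∧
      Uᴴ * ((1 : Matrix (Fin nC → ZMod 2) (Fin nC → ZMod 2) ℂ) ⊗ₖ pauli xq zq) * U
        = c' xq zq • (pauli (gxa xq zq) (gza xq zq) ⊗ₖ pauli (gxb xq zq) (gzb xq zq)))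
    (hinj : Function.Injective
      (fun PA : (Fin nA → ZMod 2) × (Fin nA → ZMod 2) => (xd PA.1 PA.2, zd PA.1 PA.2))) :
    (Function.Surjective
      (fun QD : (Fin nD → ZMod 2) × (Fin nD → ZMod 2) => (gxa QD.1 QD.2, gza QD.1 QD.2)))
    ∧ ∀ (xq zq : Fin nD → ZMod 2) (RA : (Fin nA → ZMod 2) × (Fin nA → ZMod 2)),
      (((2 ^ nA : ℂ)) ^ 2)⁻¹ *
        ∑ PA : (Fin nA → ZMod 2) × (Fin nA → ZMod 2),
          Fmat nA RA PA * otoc nA nB nC nD U PA.1 PA.2 xq zq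
        = if (gxa xq zq, gza xq zq) = RA then 1 else 0 := by
  have hΛ : ∀ x z xq zq, otoc nA nB nC nD U x z xq zq = Fmat nD (xd x z, zd x z) (xq, zq) :=
    fun x z => otoc_eq_Fmat_of_conj_eq U (hClif x z).1 (hClif x z).2
  have hΩ : ∀ x z xq zq, otoc nA nB nC nD U x z xq zq = Fmat nA (x, z) (gxa xq zq, gza xq zq) :=
    fun x z xq zq => otoc_eq_Fmat_of_adjoint_conj_eq U hU1 hU2 (hClif' xq zq).1 (hClif' xq zq).2 x z
  refine ⟨surjective_of_Fmat_adjoint (fun P Q => (hΛ _ _ _ _).symm.trans (hΩ _ _ _ _)) hinj,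
    fun xq zq RA => ?_⟩
  simp only [hΩ, Prod.mk.eta, sum_Fmat_mul_Fmat, eq_comm (a := RA)]
  split_ifs <;> simp
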